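/- arXiv:1903.08077 — 2 statements merged into one kernel-verified Lean document; each statement's English description precedes it below -/
import Mathlib

section
/- Let Ω_n ↑ Ω be an increasing sequence of bounded open sets exhausting Ω, f ∈ ℋ, and u_n = (I_n + ℬ₀⁽ⁿ⁾)⁻¹ ℙ_n(f|_{Ω_n}) the resolvent solutions on Ω_n. Then the zero-extensions ũ_n|_Ω form a bounded sequence in 𝒱 ⊆ H¹₀(Ω,ℝᵈ), with ‖u_n‖_{L²}² + ‖∇u_n‖_{L²}² ≤ ‖f‖_{L²} ‖u_n‖_{L²}. -/
open MeasureTheory Filter Topology Set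
open scoped RealInnerProductSpace ENNReal

noncomputable section

abbrev Rd (d : ℕ) := EuclideanSpace ℝ (Fin d)

variable {d : ℕ}

/-- Partial derivative in direction `j` of a scalar function. -/
def pd (j : Fin d) (ψ : Rd d → ℝ) (x : Rd d) : ℝ :=
  fderiv ℝ ψ x (EuclideanSpace.single j 1)

/-- Partial derivative in direction `j` of component `i` of a vector field. -/
def pdv (j : Fin d) (φ : Rd d → Rd d) (i : Fin d) (x : Rd d) : ℝ :=
  fderiv ℝ (fun y => φ y i) x (EuclideanSpace.single j 1)

/-- Smooth compactly supported scalar test function with support in `Ω`. -/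
def IsTest (Ω : Set (Rd d)) (ψ : Rd d → ℝ) : Prop :=
  ContDiff ℝ (⊤ : ℕ∞) ψ ∧ HasCompactSupport ψ ∧ tsupport ψ ⊆ Ω

/-- Smooth compactly supported vector test field with support in `Ω`. -/
def IsTestVF (Ω : Set (Rd d)) (φ : Rd d → Rd d) : Prop :=
  ContDiff ℝ (⊤ : ℕ∞) φ ∧ HasCompactSupport φ ∧ tsupport φ ⊆ Ω

/-- Divergence of a (smooth) vector field. -/
def divg (φ : Rd d → Rd d) (x : Rd d) : ℝ := ∑ j, pdv j φ j x

/-- Divergence-free test field in `Ω`. -/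
def IsTestDF (Ω : Set (Rd d)) (φ : Rd d → Rd d) : Prop :=
  IsTestVF Ω φ ∧ ∀ x, divg φ x = 0

/-- `p ∈ L²_loc(Ω)`. -/
def L2locOn (Ω : Set (Rd d)) (p : Rd d → ℝ) : Prop :=
  ∀ K : Set (Rd d), IsCompact K → K ⊆ Ω → MemLp p 2 (volume.restrict K)

/-- `g = ∇p` weakly on `Ω`, with `p ∈ L²_loc(Ω)` and `g ∈ L²(Ω,ℝᵈ)`. -/
def IsWeakGradOn (Ω : Set (Rd d)) (p : Rd d → ℝ) (g : Rd d → Rd d) : Prop :=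
  L2locOn Ω p ∧ MemLp g 2 (volume.restrict Ω) ∧
  ∀ ψ : Rd d → ℝ, IsTest Ω ψ → ∀ j,
    ∫ x in Ω, g x j * ψ x = - ∫ x in Ω, p x * pd j ψ x

/-- The gradient space `𝒢 ⊆ L²(Ω,ℝᵈ)`. -/
def gradSet (Ω : Set (Rd d)) : Set (Lp (Rd d) 2 (volume.restrict Ω)) :=
  {G | ∃ p g, IsWeakGradOn Ω p g ∧ ⇑G =ᵐ[volume.restrict Ω] g}

/-- The space `ℋ = 𝒢^⊥`. -/
def Hset (Ω : Set (Rd d)) : Set (Lp (Rd d) 2 (volume.restrict Ω)) :=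
  {v | ∀ G ∈ gradSet Ω, ⟪v, G⟫ = 0}

/-- Divergence-free test fields, as elements of `L²(Ω,ℝᵈ)`. -/
def testDFSet (Ω : Set (Rd d)) : Set (Lp (Rd d) 2 (volume.restrict Ω)) :=
  {u | ∃ φ, IsTestDF Ω φ ∧ ⇑u =ᵐ[volume.restrict Ω] φ}

/-- Membership in `H¹(ℝᵈ,ℝᵈ)` with weak partial derivatives `DU j`. -/
def MemH1 (U : Rd d → Rd d) (DU : Fin d → Rd d → Rd d) : Prop :=
  MemLp U 2 (volume : Measure (Rd d)) ∧ (∀ j, MemLp (DU j) 2 (volume : Measure (Rd d))) ∧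
  ∀ j i, ∀ ψ : Rd d → ℝ, IsTest univ ψ →
    ∫ x, DU j x i * ψ x = - ∫ x, U x i * pd j ψ x

/-- `div U = 0` in the sense of distributions on `ℝᵈ`. -/
def DivFreeWeak (U : Rd d → Rd d) : Prop :=
  ∀ ψ : Rd d → ℝ, IsTest univ ψ → (∫ x, ∑ j, U x j * pd j ψ x) = 0

/-- `U ∈ 𝒲(Ω)` (global representative): `U ∈ H¹(ℝᵈ,ℝᵈ)`, `div U = 0`, `U = 0` a.e.
outside the closure of `Ω`. -/
def MemWg (Ω : Set (Rd d)) (U : Rd d → Rd d) (DU : Fin d → Rd d → Rd d) : Prop :=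
  MemH1 U DU ∧ DivFreeWeak U ∧ ∀ᵐ x ∂(volume : Measure (Rd d)), x ∉ closure Ω → U x = 0

/-- `𝒲(Ω)` as a subset of `L²(Ω,ℝᵈ)`. -/
def Wset (Ω : Set (Rd d)) : Set (Lp (Rd d) 2 (volume.restrict Ω)) :=
  {u | ∃ U DU, MemWg Ω U DU ∧ ⇑u =ᵐ[volume.restrict Ω] U}

/-- `f ∈ ℰ(Ω)`: `f ∈ L²`, vanishes a.e. outside the closure of `Ω`, and is an
`L²`-limit of elements of `𝒲(Ω)`. -/
def MemE (Ω : Set (Rd d)) (f : Rd d → Rd d) : Prop :=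
  MemLp f 2 (volume : Measure (Rd d)) ∧
  (∀ᵐ x ∂(volume : Measure (Rd d)), x ∉ closure Ω → f x = 0) ∧
  ∃ w : ℕ → Rd d → Rd d, ∃ Dw : ℕ → Fin d → Rd d → Rd d,
    (∀ k, MemWg Ω (w k) (Dw k)) ∧
    Tendsto (fun k => ∫ x, ‖w k x - f x‖ ^ 2) atTop (𝓝 0)

/-- `u ∈ H¹₀(Ω,ℝᵈ)` with weak partial derivatives `Du j`: `u` is an `H¹`-limit of
smooth test fields supported in `Ω`. -/
def MemH10 (Ω : Set (Rd d)) (u : Rd d → Rd d) (Du : Fin d → Rd d → Rd d) : Prop :=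
  MemLp u 2 (volume.restrict Ω) ∧ (∀ j, MemLp (Du j) 2 (volume.restrict Ω)) ∧
  ∃ φ : ℕ → Rd d → Rd d, (∀ k, IsTestVF Ω (φ k)) ∧
    Tendsto (fun k => (∫ x in Ω, ‖u x - φ k x‖ ^ 2) +
      ∑ j, ∫ x in Ω, ∑ i, (Du j x i - pdv j (φ k) i x) ^ 2) atTop (𝓝 0)

/-- `u ∈ 𝒱(Ω)`: `H¹`-limit of divergence-free test fields supported in `Ω`. -/
def MemV (Ω : Set (Rd d)) (u : Rd d → Rd d) (Du : Fin d → Rd d → Rd d) : Prop :=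
  MemLp u 2 (volume.restrict Ω) ∧ (∀ j, MemLp (Du j) 2 (volume.restrict Ω)) ∧
  ∃ φ : ℕ → Rd d → Rd d, (∀ k, IsTestDF Ω (φ k)) ∧
    Tendsto (fun k => (∫ x in Ω, ‖u x - φ k x‖ ^ 2) +
      ∑ j, ∫ x in Ω, ∑ i, (Du j x i - pdv j (φ k) i x) ^ 2) atTop (𝓝 0)

/-- `u ∈ 𝒳(Ω) = H¹₀(Ω,ℝᵈ) ∩ ℋ`. -/
def MemX (Ω : Set (Rd d)) (u : Rd d → Rd d) (Du : Fin d → Rd d → Rd d) : Prop :=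
  MemH10 Ω u Du ∧ ∀ p g, IsWeakGradOn Ω p g → ∫ x in Ω, ⟪u x, g x⟫ = 0

/-- `𝒳(Ω)` as a subset of `L²(Ω,ℝᵈ)`. -/
def Xset (Ω : Set (Rd d)) : Set (Lp (Rd d) 2 (volume.restrict Ω)) :=
  {w | ∃ u Du, MemX Ω u Du ∧ ⇑w =ᵐ[volume.restrict Ω] u}


lemma my_ext0 {s Ω : Set (Rd d)} (hsΩ : s ⊆ Ω) {g : Rd d → ℝ}
    (h0 : ∀ x ∉ s, g x = 0) :
    ∫ x in Ω, g x = ∫ x in s, g x :=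
  (setIntegral_eq_integral_of_forall_compl_eq_zero
      (fun x hx => h0 x (fun hxs => hx (hsΩ hxs)))).trans
    (setIntegral_eq_integral_of_forall_compl_eq_zero h0).symm

lemma my_CS {μ : Measure (Rd d)} {f g : Rd d → Rd d}
    (hf : MemLp f 2 μ) (hg : MemLp g 2 μ) :
    ∫ x, ⟪f x, g x⟫ ∂μ ≤
      Real.sqrt (∫ x, ‖f x‖ ^ 2 ∂μ) * Real.sqrt (∫ x, ‖g x‖ ^ 2 ∂μ) := by
  have hfg_int : Integrable (fun x => ‖f x‖ * ‖g x‖) μ := by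
    refine Integrable.mono' ((hf.norm.integrable_sq).add (hg.norm.integrable_sq))
      (hf.1.norm.mul hg.1.norm) (ae_of_all _ fun x => ?_)
    rw [Real.norm_of_nonneg (mul_nonneg (norm_nonneg _) (norm_nonneg _))]
    simp only [Pi.add_apply]
    nlinarith [sq_nonneg (‖f x‖ - ‖g x‖)]
  have hinner_int : Integrable (fun x => ⟪f x, g x⟫) μ := by
    refine hfg_int.mono' (hf.1.inner hg.1) (ae_of_all _ fun x => ?_)
    simpa using abs_real_inner_le_norm (f x) (g x)
  have step1 : ∫ x, ⟪f x, g x⟫ ∂μ ≤ ∫ x, ‖f x‖ * ‖g x‖ ∂μ :=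
    integral_mono hinner_int hfg_int (fun x => real_inner_le_norm _ _)
  have h2 : (ENNReal.ofReal (2:ℝ)) = 2 := by norm_num
  have hfn : MemLp (fun x => ‖f x‖) (ENNReal.ofReal (2:ℝ)) μ := by rw [h2]; exact hf.norm
  have hgn : MemLp (fun x => ‖g x‖) (ENNReal.ofReal (2:ℝ)) μ := by rw [h2]; exact hg.norm
  have step2 := integral_mul_le_Lp_mul_Lq_of_nonneg (μ := μ) (p := 2) (q := 2)
    ⟨by norm_num, by norm_num, by norm_num⟩
    (ae_of_all _ fun x => norm_nonneg (f x)) (ae_of_all _ fun x => norm_nonneg (g x))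
    hfn hgn
  have hpow : ∀ h : Rd d → Rd d,
      (∫ x, ‖h x‖ ^ (2:ℝ) ∂μ) ^ (1/(2:ℝ)) = Real.sqrt (∫ x, ‖h x‖ ^ 2 ∂μ) := by
    intro h
    rw [Real.sqrt_eq_rpow]
    congr 1
    refine integral_congr_ae (ae_of_all _ fun x => ?_)
    show ‖h x‖ ^ (2:ℝ) = ‖h x‖ ^ (2:ℕ)
    rw [show (2:ℝ) = ((2:ℕ):ℝ) by norm_num, Real.rpow_natCast]
  calc ∫ x, ⟪f x, g x⟫ ∂μ ≤ ∫ x, ‖f x‖ * ‖g x‖ ∂μ := step1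
    _ ≤ (∫ x, ‖f x‖ ^ (2:ℝ) ∂μ) ^ (1/(2:ℝ)) * (∫ x, ‖g x‖ ^ (2:ℝ) ∂μ) ^ (1/(2:ℝ)) := step2
    _ = _ := by rw [hpow f, hpow g]

lemma my_pdv_zero {s : Set (Rd d)} {φ : Rd d → Rd d} (hsupp : tsupport φ ⊆ s)
    {x : Rd d} (hx : x ∉ s) (j i : Fin d) : pdv j φ i x = 0 := by
  have h1 : tsupport (fun y => φ y i) ⊆ tsupport φ :=
    closure_mono (fun y hy => by
      simp only [Function.mem_support] at hy ⊢
      intro h; exact hy (by rw [h]; rfl))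
  have hx' : x ∉ tsupport (fun y => φ y i) := fun h => hx (hsupp (h1 h))
  have : fderiv ℝ (fun y => φ y i) x = 0 := by
    by_contra h
    exact hx' (support_fderiv_subset ℝ (Function.mem_support.2 h))
  simp [pdv, this]

lemma my_int_ind_sq {s Ω : Set (Rd d)} (hs : MeasurableSet s) (hsΩ : s ⊆ Ω)
    (v : Rd d → Rd d) :
    ∫ x in Ω, ‖s.indicator v x‖ ^ 2 = ∫ x in s, ‖v x‖ ^ 2 := by
  rw [my_ext0 hsΩ (fun x hx => by simp [indicator_of_notMem hx])]
  exact setIntegral_congr_fun hs (fun x hx => by rw [indicator_of_mem hx])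

/-- for `Ωₙ ↑ Ω` the resolvent solutions `uₙ = (Iₙ + ℬ₀⁽ⁿ⁾)⁻¹ ℙₙ(f|Ωₙ)`
satisfy the energy estimate `‖uₙ‖² + ‖∇uₙ‖² ≤ ‖f‖‖uₙ‖`, and their zero-extensions
form a bounded sequence in `𝒱(Ω) ⊆ H¹₀(Ω,ℝᵈ)`. -/
theorem stmt8 (d : ℕ) (Ω : Set (Rd d)) (Ωs : ℕ → Set (Rd d))
    (hΩ : IsOpen Ω) (hΩbdd : Bornology.IsBounded Ω)
    (hopen : ∀ n, IsOpen (Ωs n)) (hbdd : ∀ n, Bornology.IsBounded (Ωs n))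
    (hmono : ∀ n, Ωs n ⊆ Ωs (n + 1)) (hsub : ∀ n, Ωs n ⊆ Ω)
    (hexh : ∀ K : Set (Rd d), IsCompact K → K ⊆ Ω → ∃ n, K ⊆ Ωs n)
    (f : Rd d → Rd d) (hf : MemLp f 2 (volume.restrict Ω))
    (hfH : ∀ p g, IsWeakGradOn Ω p g → (∫ x in Ω, ⟪f x, g x⟫) = 0)
    (u : ℕ → Rd d → Rd d) (Du : ℕ → Fin d → Rd d → Rd d)
    (hu : ∀ n, MemV (Ωs n) (u n) (Du n))
    (hres : ∀ n v Dv, MemV (Ωs n) v Dv →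
      (∑ j, ∫ x in Ωs n, ⟪Du n j x, Dv j x⟫) + (∫ x in Ωs n, ⟪u n x, v x⟫)
        = ∫ x in Ωs n, ⟪f x, v x⟫) :
    (∀ n, (∫ x in Ωs n, ‖u n x‖ ^ 2) + (∑ j, ∫ x in Ωs n, ‖Du n j x‖ ^ 2)
      ≤ Real.sqrt (∫ x in Ω, ‖f x‖ ^ 2) * Real.sqrt (∫ x in Ωs n, ‖u n x‖ ^ 2)) ∧
    (∀ n, MemV Ω ((Ωs n).indicator (u n)) (fun j => (Ωs n).indicator (Du n j))) ∧
    ∃ C : ℝ, ∀ n, (∫ x in Ω, ‖(Ωs n).indicator (u n) x‖ ^ 2)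
      + (∑ j, ∫ x in Ω, ‖(Ωs n).indicator (Du n j) x‖ ^ 2) ≤ C := by

  have hmeas : ∀ n, MeasurableSet (Ωs n) := fun n => (hopen n).measurableSet
  have hfn : ∀ n, MemLp f 2 (volume.restrict (Ωs n)) := by
    intro n
    have h := hf.restrict (μ := volume.restrict Ω) (Ωs n)
    rwa [Measure.restrict_restrict (hmeas n), inter_eq_self_of_subset_left (hsub n)] at h
  have hfint : IntegrableOn (fun x => ‖f x‖ ^ 2) Ω volume := hf.norm.integrable_sq
  have hfmono : ∀ n, ∫ x in Ωs n, ‖f x‖ ^ 2 ≤ ∫ x in Ω, ‖f x‖ ^ 2 := fun n =>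
    setIntegral_mono_set hfint (ae_of_all _ fun x => sq_nonneg _)
      (HasSubset.Subset.eventuallyLE (hsub n))
  have part1 : ∀ n, (∫ x in Ωs n, ‖u n x‖ ^ 2) + (∑ j, ∫ x in Ωs n, ‖Du n j x‖ ^ 2)
      ≤ Real.sqrt (∫ x in Ω, ‖f x‖ ^ 2) * Real.sqrt (∫ x in Ωs n, ‖u n x‖ ^ 2) := by
    intro n
    have key := hres n (u n) (Du n) (hu n)
    have e1 : (∫ x in Ωs n, ⟪u n x, u n x⟫) = ∫ x in Ωs n, ‖u n x‖ ^ 2 :=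
      integral_congr_ae (ae_of_all _ fun x => real_inner_self_eq_norm_sq _)
    have e2 : ∀ j, (∫ x in Ωs n, ⟪Du n j x, Du n j x⟫) = ∫ x in Ωs n, ‖Du n j x‖ ^ 2 :=
      fun j => integral_congr_ae (ae_of_all _ fun x => real_inner_self_eq_norm_sq _)
    have hrw : (∫ x in Ωs n, ‖u n x‖ ^ 2) + (∑ j, ∫ x in Ωs n, ‖Du n j x‖ ^ 2)
        = ∫ x in Ωs n, ⟪f x, u n x⟫ := by
      rw [← e1, ← Finset.sum_congr rfl (fun j _ => (e2 j))]
      linarith [key]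
    rw [hrw]
    exact (my_CS (hfn n) (hu n).1).trans
      (mul_le_mul_of_nonneg_right (Real.sqrt_le_sqrt (hfmono n)) (Real.sqrt_nonneg _))
  refine ⟨part1, ?_, ?_⟩
  · intro n
    obtain ⟨hu2, hDu2, φ, hφ, hlim⟩ := hu n
    refine ⟨((memLp_indicator_iff_restrict (hmeas n)).2 hu2).restrict Ω,
      fun j => ((memLp_indicator_iff_restrict (hmeas n)).2 (hDu2 j)).restrict Ω,
      φ, fun k => ⟨⟨(hφ k).1.1, (hφ k).1.2.1, (hφ k).1.2.2.trans (hsub n)⟩, (hφ k).2⟩, ?_⟩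
    have heq : ∀ k,
        ((∫ x in Ω, ‖(Ωs n).indicator (u n) x - φ k x‖ ^ 2) +
          ∑ j, ∫ x in Ω, ∑ i, ((Ωs n).indicator (Du n j) x i - pdv j (φ k) i x) ^ 2)
        = (∫ x in Ωs n, ‖u n x - φ k x‖ ^ 2) +
          ∑ j, ∫ x in Ωs n, ∑ i, (Du n j x i - pdv j (φ k) i x) ^ 2 := by
      intro k
      obtain ⟨⟨hsm, hcpt, hsupp⟩, hdiv⟩ := hφ k
      have hφ0 : ∀ x ∉ Ωs n, φ k x = 0 := fun x hx =>
        image_eq_zero_of_notMem_tsupport (fun h => hx (hsupp h))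
      congr 1
      · rw [my_ext0 (hsub n) (fun x hx => by
          simp [indicator_of_notMem hx, hφ0 x hx])]
        exact setIntegral_congr_fun (hmeas n) (fun x hx => by rw [indicator_of_mem hx])
      · refine Finset.sum_congr rfl (fun j _ => ?_)
        rw [my_ext0 (hsub n) (fun x hx => Finset.sum_eq_zero (fun i _ => by
          rw [indicator_of_notMem hx, my_pdv_zero hsupp hx j i]; simp))]
        exact setIntegral_congr_fun (hmeas n) (fun x hx => by rw [indicator_of_mem hx])
    have hfe : (fun k => (∫ x in Ω, ‖(Ωs n).indicator (u n) x - φ k x‖ ^ 2) +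
          ∑ j, ∫ x in Ω, ∑ i, ((Ωs n).indicator (Du n j) x i - pdv j (φ k) i x) ^ 2)
        = (fun k => (∫ x in Ωs n, ‖u n x - φ k x‖ ^ 2) +
          ∑ j, ∫ x in Ωs n, ∑ i, (Du n j x i - pdv j (φ k) i x) ^ 2) := funext heq
    show Tendsto _ atTop (𝓝 0)
    rw [show (fun k => (∫ x in Ω, ‖(Ωs n).indicator (u n) x - φ k x‖ ^ 2) +
          ∑ j, ∫ x in Ω, ∑ i, ((fun j => (Ωs n).indicator (Du n j)) j x i - pdv j (φ k) i x) ^ 2)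
        = (fun k => (∫ x in Ωs n, ‖u n x - φ k x‖ ^ 2) +
          ∑ j, ∫ x in Ωs n, ∑ i, (Du n j x i - pdv j (φ k) i x) ^ 2) from hfe]
    exact hlim
  · refine ⟨∫ x in Ω, ‖f x‖ ^ 2, fun n => ?_⟩
    have h1 := part1 n
    have e1 : ∫ x in Ω, ‖(Ωs n).indicator (u n) x‖ ^ 2 = ∫ x in Ωs n, ‖u n x‖ ^ 2 :=
      my_int_ind_sq (hmeas n) (hsub n) _
    have e2 : (∑ j, ∫ x in Ω, ‖(Ωs n).indicator (Du n j) x‖ ^ 2)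
        = ∑ j, ∫ x in Ωs n, ‖Du n j x‖ ^ 2 :=
      Finset.sum_congr rfl (fun j _ => my_int_ind_sq (hmeas n) (hsub n) _)
    rw [e1, e2]
    have hX : 0 ≤ ∫ x in Ωs n, ‖u n x‖ ^ 2 :=
      setIntegral_nonneg (hmeas n) (fun x _ => sq_nonneg _)
    have hS : 0 ≤ ∑ j, ∫ x in Ωs n, ‖Du n j x‖ ^ 2 :=
      Finset.sum_nonneg (fun j _ => setIntegral_nonneg (hmeas n) fun x _ => sq_nonneg _)
    have hF : 0 ≤ ∫ x in Ω, ‖f x‖ ^ 2 :=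
      setIntegral_nonneg hΩ.measurableSet fun x _ => sq_nonneg _
    have hsq := Real.sq_sqrt hX
    have hsqF := Real.sq_sqrt hF
    nlinarith [Real.sqrt_nonneg (∫ x in Ωs n, ‖u n x‖ ^ 2),
      Real.sqrt_nonneg (∫ x in Ω, ‖f x‖ ^ 2),
      sq_nonneg (Real.sqrt (∫ x in Ω, ‖f x‖ ^ 2) - Real.sqrt (∫ x in Ωs n, ‖u n x‖ ^ 2))]
end
end

section
/- Let Ω_n ↑ Ω be bounded open sets, and suppose u_n ∈ 𝒱_n (closure of divergence-free test fields in H¹₀(Ω_n,ℝᵈ)) satisfy ⟨∇u_n,∇v⟩ + ⟨u_n,v⟩ = ⟨f,v⟩ for all v ∈ 𝒱_n, and that the zero-extensions ũ_n|_Ω converge weakly in H¹₀(Ω,ℝᵈ) to some u ∈ 𝒱. Then ⟨∇u,∇v⟩ + ⟨u,v⟩ = ⟨f,v⟩ for all v ∈ 𝒱, i.e. u = (I+ℬ₀)⁻¹f. -/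
open MeasureTheory Filter Topology Set
open scoped RealInnerProductSpace ENNReal

noncomputable section

variable {d : ℕ}

-- Auxiliary lemmas


lemma inner_toLp {μ : Measure (Rd d)} {g h : Rd d → Rd d}
    (hg : MemLp g 2 μ) (hh : MemLp h 2 μ) :
    ⟪hg.toLp g, hh.toLp h⟫ = ∫ x, ⟪g x, h x⟫ ∂μ := by
  rw [MeasureTheory.L2.inner_def]
  refine integral_congr_ae ?_
  filter_upwards [hg.coeFn_toLp, hh.coeFn_toLp] with x h1 h2
  rw [h1, h2]

lemma norm_toLp_sq {μ : Measure (Rd d)} {h : Rd d → Rd d} (hh : MemLp h 2 μ) :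
    ‖hh.toLp h‖ = Real.sqrt (∫ x, ‖h x‖ ^ 2 ∂μ) := by
  have h1 : ⟪hh.toLp h, hh.toLp h⟫ = ∫ x, ‖h x‖ ^ 2 ∂μ := by
    rw [inner_toLp hh hh]
    exact integral_congr_ae (Eventually.of_forall fun x => real_inner_self_eq_norm_sq _)
  rw [real_inner_self_eq_norm_sq] at h1
  rw [← h1, Real.sqrt_sq (norm_nonneg _)]

lemma inner_integral_tendsto {μ : Measure (Rd d)} {g v : Rd d → Rd d}
    (hg : MemLp g 2 μ) (hv : MemLp v 2 μ) {φ : ℕ → Rd d → Rd d}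
    (hφ : ∀ k, MemLp (φ k) 2 μ)
    (hlim : Tendsto (fun k => ∫ x, ‖v x - φ k x‖ ^ 2 ∂μ) atTop (𝓝 0)) :
    Tendsto (fun k => ∫ x, ⟪g x, φ k x⟫ ∂μ) atTop (𝓝 (∫ x, ⟪g x, v x⟫ ∂μ)) := by
  have key : Tendsto (fun k => (∫ x, ⟪g x, v x⟫ ∂μ) - ∫ x, ⟪g x, φ k x⟫ ∂μ) atTop (𝓝 0) := by
    refine squeeze_zero_norm (a := fun k => ‖hg.toLp g‖ * Real.sqrt (∫ x, ‖v x - φ k x‖ ^ 2 ∂μ)) ?_ ?_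
    · intro k
      have e1 : (∫ x, ⟪g x, v x⟫ ∂μ) - ∫ x, ⟪g x, φ k x⟫ ∂μ
          = ⟪hg.toLp g, hv.toLp v - (hφ k).toLp (φ k)⟫ := by
        rw [inner_sub_right, inner_toLp hg hv, inner_toLp hg (hφ k)]
      rw [e1]
      calc ‖⟪hg.toLp g, hv.toLp v - (hφ k).toLp (φ k)⟫‖
          ≤ ‖hg.toLp g‖ * ‖hv.toLp v - (hφ k).toLp (φ k)‖ := norm_inner_le_norm _ _
        _ = ‖hg.toLp g‖ * Real.sqrt (∫ x, ‖v x - φ k x‖ ^ 2 ∂μ) := by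
            rw [← MemLp.toLp_sub hv (hφ k)]
            congr 1
            rw [norm_toLp_sq (hv.sub (hφ k))]
            simp only [Pi.sub_apply]
    · have : Tendsto (fun k => Real.sqrt (∫ x, ‖v x - φ k x‖ ^ 2 ∂μ)) atTop (𝓝 0) := by
        simpa [Real.sqrt_zero, Function.comp_def] using (Real.continuous_sqrt.continuousAt.tendsto.comp hlim)
      simpa using (tendsto_const_nhds (x := ‖hg.toLp g‖)).mul this
  have := key.const_sub (∫ x, ⟪g x, v x⟫ ∂μ)
  simpa using this

/-- the full-gradient directional derivative -/
def Dphi (j : Fin d) (φ : Rd d → Rd d) (x : Rd d) : Rd d :=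
  fderiv ℝ φ x (EuclideanSpace.single j 1)

lemma Dphi_apply {φ : Rd d → Rd d} (hφ : ContDiff ℝ (⊤ : ℕ∞) φ) (j i : Fin d) (x : Rd d) :
    Dphi j φ x i = pdv j φ i x := by
  have hdiff : DifferentiableAt ℝ φ x := (hφ.differentiable (by simp)) x
  have hc : HasFDerivAt (fun y => φ y i)
      ((EuclideanSpace.proj (𝕜 := ℝ) i).comp (fderiv ℝ φ x)) x :=
    (EuclideanSpace.proj (𝕜 := ℝ) i).hasFDerivAt.comp x hdiff.hasFDerivAt
  rw [pdv, hc.fderiv]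
  rfl

lemma Dphi_continuous {φ : Rd d → Rd d} (hφ : ContDiff ℝ (⊤ : ℕ∞) φ) (j : Fin d) :
    Continuous (Dphi j φ) :=
  (hφ.continuous_fderiv (by simp)).clm_apply continuous_const

lemma Dphi_compactSupport {φ : Rd d → Rd d} (hφ : HasCompactSupport φ) (j : Fin d) :
    HasCompactSupport (Dphi j φ) :=
  hφ.fderiv_apply ℝ (EuclideanSpace.single j 1)

lemma Dphi_tsupport {φ : Rd d → Rd d} (j : Fin d) : tsupport (Dphi j φ) ⊆ tsupport φ := by
  refine closure_minimal ?_ (isClosed_tsupport φ)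
  intro x hx
  simp only [Function.mem_support, Ne] at hx
  by_contra h0
  apply hx
  have hfd : fderiv ℝ φ x = 0 := by
    have hev : φ =ᶠ[𝓝 x] fun _ => 0 := by
      have hop : IsOpen (tsupport φ)ᶜ := (isClosed_tsupport φ).isOpen_compl
      filter_upwards [hop.mem_nhds h0] with y hy using image_eq_zero_of_notMem_tsupport hy
    rw [Filter.EventuallyEq.fderiv_eq hev]
    simp
  simp [Dphi, hfd]



lemma norm_sq_eq_sum (y : Rd d) : ‖y‖ ^ 2 = ∑ i, (y i) ^ 2 := by
  rw [EuclideanSpace.norm_eq, Real.sq_sqrt (Finset.sum_nonneg fun i _ => sq_nonneg _)]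
  exact Finset.sum_congr rfl fun i _ => by rw [Real.norm_eq_abs, sq_abs]

lemma setIntegral_inner_indicator {s Ω : Set (Rd d)} (hs : MeasurableSet s) (hsub : s ⊆ Ω)
    (g w : Rd d → Rd d) :
    ∫ x in Ω, ⟪s.indicator g x, w x⟫ = ∫ x in s, ⟪g x, w x⟫ := by
  have h1 : ∀ x, ⟪s.indicator g x, w x⟫ = s.indicator (fun x => ⟪g x, w x⟫) x := by
    intro x
    by_cases hx : x ∈ s <;> simp [Set.indicator_of_mem, Set.indicator_of_notMem, hx]
  simp_rw [h1]
  rw [setIntegral_indicator hs, Set.inter_eq_self_of_subset_right hsub]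

lemma setIntegral_inner_of_support {s Ω : Set (Rd d)} (hs : MeasurableSet s) (hsub : s ⊆ Ω)
    (g w : Rd d → Rd d) (hw : tsupport w ⊆ s) :
    ∫ x in Ω, ⟪g x, w x⟫ = ∫ x in s, ⟪g x, w x⟫ := by
  have h1 : (fun x => ⟪g x, w x⟫) = s.indicator (fun x => ⟪g x, w x⟫) := by
    refine (Set.indicator_eq_self.2 ?_).symm
    intro x hx
    have hwx : w x ≠ 0 := by
      intro h0
      simp only [Function.mem_support, h0, inner_zero_right, ne_eq, not_true_eq_false] at hx
    exact hw (subset_tsupport w hwx)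
  calc ∫ x in Ω, ⟪g x, w x⟫ = ∫ x in Ω, s.indicator (fun x => ⟪g x, w x⟫) x := by rw [← h1]
    _ = ∫ x in s, ⟪g x, w x⟫ := by
        rw [setIntegral_indicator hs, Set.inter_eq_self_of_subset_right hsub]

/-- identification of the weak limit for increasing domains. If the
zero-extensions of the resolvent solutions `uₙ` converge weakly in `H¹₀(Ω,ℝᵈ)` to
`u ∈ 𝒱`, then `u` satisfies the limit variational problem, i.e. `u = (I+ℬ₀)⁻¹f`. -/
theorem stmt11 (d : ℕ) (Ω : Set (Rd d)) (Ωs : ℕ → Set (Rd d))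
    (hΩ : IsOpen Ω) (hΩbdd : Bornology.IsBounded Ω)
    (hopen : ∀ n, IsOpen (Ωs n)) (hbdd : ∀ n, Bornology.IsBounded (Ωs n))
    (hmono : ∀ n, Ωs n ⊆ Ωs (n + 1)) (hsub : ∀ n, Ωs n ⊆ Ω)
    (hexh : ∀ K : Set (Rd d), IsCompact K → K ⊆ Ω → ∃ n, K ⊆ Ωs n)
    (f : Rd d → Rd d) (hf : MemLp f 2 (volume.restrict Ω))
    (hfH : ∀ p g, IsWeakGradOn Ω p g → (∫ x in Ω, ⟪f x, g x⟫) = 0)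
    (u : ℕ → Rd d → Rd d) (Du : ℕ → Fin d → Rd d → Rd d)
    (hu : ∀ n, MemV (Ωs n) (u n) (Du n))
    (hres : ∀ n v Dv, MemV (Ωs n) v Dv →
      (∑ j, ∫ x in Ωs n, ⟪Du n j x, Dv j x⟫) + (∫ x in Ωs n, ⟪u n x, v x⟫)
        = ∫ x in Ωs n, ⟪f x, v x⟫)
    (u' : Rd d → Rd d) (Du' : Fin d → Rd d → Rd d) (hu' : MemV Ω u' Du')
    (hweak : ∀ w : Rd d → Rd d, MemLp w 2 (volume.restrict Ω) →
      Tendsto (fun n => ∫ x in Ω, ⟪(Ωs n).indicator (u n) x, w x⟫) atTop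
        (𝓝 (∫ x in Ω, ⟪u' x, w x⟫)))
    (hweakD : ∀ (j : Fin d) (w : Rd d → Rd d), MemLp w 2 (volume.restrict Ω) →
      Tendsto (fun n => ∫ x in Ω, ⟪(Ωs n).indicator (Du n j) x, w x⟫) atTop
        (𝓝 (∫ x in Ω, ⟪Du' j x, w x⟫))) :
    ∀ v Dv, MemV Ω v Dv →
      (∑ j, ∫ x in Ω, ⟪Du' j x, Dv j x⟫) + (∫ x in Ω, ⟪u' x, v x⟫)
        = ∫ x in Ω, ⟪f x, v x⟫ := by
  have hmono' : ∀ {m n : ℕ}, m ≤ n → Ωs m ⊆ Ωs n := by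
    intro m n h
    exact monotone_nat_of_le_succ hmono h
  have hΩsmeas : ∀ n, MeasurableSet (Ωs n) := fun n => (hopen n).measurableSet
  have key : ∀ φ : Rd d → Rd d, IsTestDF Ω φ →
      (∑ j, ∫ x in Ω, ⟪Du' j x, Dphi j φ x⟫) + (∫ x in Ω, ⟪u' x, φ x⟫)
        = ∫ x in Ω, ⟪f x, φ x⟫ := by
    rintro φ ⟨⟨hφc, hφsupp, hφsub⟩, hφdiv⟩
    obtain ⟨N, hN⟩ := hexh (tsupport φ) hφsupp hφsub
    have hφcont : Continuous φ := hφc.continuous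
    have hφL2 : MemLp φ 2 (volume : Measure (Rd d)) :=
      hφcont.memLp_of_hasCompactSupport hφsupp
    have hDφL2 : ∀ j, MemLp (Dphi j φ) 2 (volume : Measure (Rd d)) :=
      fun j => (Dphi_continuous hφc j).memLp_of_hasCompactSupport (Dphi_compactSupport hφsupp j)
    have hev : ∀ n, N ≤ n →
        (∑ j, ∫ x in Ω, ⟪(Ωs n).indicator (Du n j) x, Dphi j φ x⟫)
          + (∫ x in Ω, ⟪(Ωs n).indicator (u n) x, φ x⟫) = ∫ x in Ω, ⟪f x, φ x⟫ := by
      intro n hn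
      have hsupn : tsupport φ ⊆ Ωs n := hN.trans (hmono' hn)
      have hmemV : MemV (Ωs n) φ (fun j => Dphi j φ) := by
        refine ⟨hφL2.restrict _, fun j => (hDφL2 j).restrict _, fun _ => φ,
          fun _ => ⟨⟨hφc, hφsupp, hsupn⟩, hφdiv⟩, ?_⟩
        have hzero : (fun _ : ℕ => (∫ x in Ωs n, ‖φ x - φ x‖ ^ 2) +
            ∑ j, ∫ x in Ωs n, ∑ i, ((fun j => Dphi j φ) j x i - pdv j φ i x) ^ 2)
            = fun _ => (0 : ℝ) := by
          funext k
          simp [Dphi_apply hφc]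
        rw [hzero]
        exact tendsto_const_nhds
      have e := hres n φ (fun j => Dphi j φ) hmemV
      have e1 : ∀ j, ∫ x in Ωs n, ⟪Du n j x, Dphi j φ x⟫
          = ∫ x in Ω, ⟪(Ωs n).indicator (Du n j) x, Dphi j φ x⟫ :=
        fun j => (setIntegral_inner_indicator (hΩsmeas n) (hsub n) _ _).symm
      have e2 : ∫ x in Ωs n, ⟪u n x, φ x⟫ = ∫ x in Ω, ⟪(Ωs n).indicator (u n) x, φ x⟫ :=
        (setIntegral_inner_indicator (hΩsmeas n) (hsub n) _ _).symm
      have e3 : ∫ x in Ωs n, ⟪f x, φ x⟫ = ∫ x in Ω, ⟪f x, φ x⟫ :=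
        setIntegral_inner_of_support (hΩsmeas n) (hsub n) _ _ hsupn |>.symm ▸
          (setIntegral_inner_of_support (hΩsmeas n) (hsub n) f φ hsupn).symm
      rw [← e3, ← e]
      congr 1
      · exact (Finset.sum_congr rfl fun j _ => (e1 j).symm)
      · exact e2.symm
    have hlim1 : Tendsto (fun n => (∑ j, ∫ x in Ω, ⟪(Ωs n).indicator (Du n j) x, Dphi j φ x⟫)
        + (∫ x in Ω, ⟪(Ωs n).indicator (u n) x, φ x⟫)) atTop
        (𝓝 ((∑ j, ∫ x in Ω, ⟪Du' j x, Dphi j φ x⟫) + (∫ x in Ω, ⟪u' x, φ x⟫))) :=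
      Tendsto.add (tendsto_finset_sum _ fun j _ => hweakD j _ ((hDφL2 j).restrict _))
        (hweak φ (hφL2.restrict _))
    have hlim2 : Tendsto (fun n => (∑ j, ∫ x in Ω, ⟪(Ωs n).indicator (Du n j) x, Dphi j φ x⟫)
        + (∫ x in Ω, ⟪(Ωs n).indicator (u n) x, φ x⟫)) atTop
        (𝓝 (∫ x in Ω, ⟪f x, φ x⟫)) := by
      refine Tendsto.congr' ?_ tendsto_const_nhds
      filter_upwards [eventually_ge_atTop N] with n hn using (hev n hn).symm
    exact tendsto_nhds_unique hlim1 hlim2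
  rintro v Dv ⟨hvL2, hDvL2, φs, hφsDF, htend⟩
  have hφsL2 : ∀ k, MemLp (φs k) 2 (volume.restrict Ω) := fun k =>
    ((hφsDF k).1.1.continuous.memLp_of_hasCompactSupport (hφsDF k).1.2.1).restrict _
  have hDφsL2 : ∀ j k, MemLp (Dphi j (φs k)) 2 (volume.restrict Ω) := fun j k =>
    ((Dphi_continuous (hφsDF k).1.1 j).memLp_of_hasCompactSupport
      (Dphi_compactSupport (hφsDF k).1.2.1 j)).restrict _
  set S : ℕ → ℝ := fun k => ∫ x in Ω, ‖v x - φs k x‖ ^ 2 with hSdef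
  set T : Fin d → ℕ → ℝ := fun j k => ∫ x in Ω, ∑ i, (Dv j x i - pdv j (φs k) i x) ^ 2 with hTdef
  have hS0 : ∀ k, 0 ≤ S k := fun k => integral_nonneg fun x => sq_nonneg _
  have hT0 : ∀ j k, 0 ≤ T j k := fun j k =>
    integral_nonneg fun x => Finset.sum_nonneg fun i _ => sq_nonneg _
  have hS : Tendsto S atTop (𝓝 0) :=
    squeeze_zero hS0 (fun k => le_add_of_nonneg_right (Finset.sum_nonneg fun j _ => hT0 j k)) htend
  have hT : ∀ j, Tendsto (T j) atTop (𝓝 0) := fun j =>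
    squeeze_zero (hT0 j)
      (fun k => ((Finset.single_le_sum (fun j _ => hT0 j k) (Finset.mem_univ j)).trans
        (le_add_of_nonneg_left (hS0 k)))) htend
  have hfv : Tendsto (fun k => ∫ x in Ω, ⟪f x, φs k x⟫) atTop (𝓝 (∫ x in Ω, ⟪f x, v x⟫)) :=
    inner_integral_tendsto hf hvL2 hφsL2 hS
  have huv : Tendsto (fun k => ∫ x in Ω, ⟪u' x, φs k x⟫) atTop
      (𝓝 (∫ x in Ω, ⟪u' x, v x⟫)) :=
    inner_integral_tendsto hu'.1 hvL2 hφsL2 hS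
  have hDjv : ∀ j, Tendsto (fun k => ∫ x in Ω, ⟪Du' j x, Dphi j (φs k) x⟫) atTop
      (𝓝 (∫ x in Ω, ⟪Du' j x, Dv j x⟫)) := by
    intro j
    have hpoint : ∀ k x, ‖Dv j x - Dphi j (φs k) x‖ ^ 2
        = ∑ i, (Dv j x i - pdv j (φs k) i x) ^ 2 := by
      intro k x
      rw [norm_sq_eq_sum]
      refine Finset.sum_congr rfl fun i _ => ?_
      rw [PiLp.sub_apply, Dphi_apply (hφsDF k).1.1]
    have hlimj : Tendsto (fun k => ∫ x in Ω, ‖Dv j x - Dphi j (φs k) x‖ ^ 2) atTop (𝓝 0) := by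
      simp only [hpoint]
      exact hT j
    exact inner_integral_tendsto (hu'.2.1 j) (hDvL2 j) (hDφsL2 j) hlimj
  have hk : ∀ k, (∑ j, ∫ x in Ω, ⟪Du' j x, Dphi j (φs k) x⟫)
      + (∫ x in Ω, ⟪u' x, φs k x⟫) = ∫ x in Ω, ⟪f x, φs k x⟫ :=
    fun k => key (φs k) (hφsDF k)
  have hL : Tendsto (fun k => (∑ j, ∫ x in Ω, ⟪Du' j x, Dphi j (φs k) x⟫)
      + (∫ x in Ω, ⟪u' x, φs k x⟫)) atTop
      (𝓝 ((∑ j, ∫ x in Ω, ⟪Du' j x, Dv j x⟫) + (∫ x in Ω, ⟪u' x, v x⟫))) :=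
    Tendsto.add (tendsto_finset_sum _ fun j _ => hDjv j) huv
  have hR : Tendsto (fun k => (∑ j, ∫ x in Ω, ⟪Du' j x, Dphi j (φs k) x⟫)
      + (∫ x in Ω, ⟪u' x, φs k x⟫)) atTop (𝓝 (∫ x in Ω, ⟪f x, v x⟫)) :=
    hfv.congr fun k => (hk k).symm
  exact tendsto_nhds_unique hL hR
end
end
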